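/- Let n ≥ 1 and let H(z,x) be a convergent power series in (z,x) ∈ ℂ^n × ℂ with H(0,0) ≠ 0. Let d ≥ 1 and let P(T) = Σ_{j=1}^d a_j(z,x) T^j be a polynomial in one variable T whose coefficients are formal power series a_j = Σ_{k≥1} a_{j,k}(z) x^k in x with no term independent of x, and such that each a_{j,k}(z) is a convergent power series in z. Let χ(z,x) = Σ_{k≥0} χ_k(z) x^k with each χ_k a convergent power series in z. Suppose F(z,x) = Σ_{k≥0} F_k(z) x^k, where each F_k is a formal power series in z, satisfies the identity F·H² + P(F) = χ in the ring of formal power series ℂ[[z,x]]. Then every coefficient series F_k(z) is a convergent power series. -/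

import Mathlib

/-!
STATEMENT 5.
Formal power series in `(z,x) ∈ ℂ^n × ℂ` are identified with power series in `x` whose
coefficients are formal power series in `z`, i.e. with elements of
`PowerSeries (MvPowerSeries (Fin n) ℂ)`.  A multivariate power series is *convergent* if
its coefficients admit a geometric bound `‖c_m‖ ≤ C r^{|m|}` (positive radius of
convergence), and similarly for joint convergence in `(z,x)`.

Suppose `H(z,x)` is convergent with `H(0,0) ≠ 0`, `P(T) = Σ_{j=1}^d a_j(z,x) T^j` has
coefficients `a_j` with no term independent of `x` and with convergent `x`-coefficients,
`χ(z,x)` has convergent `x`-coefficients, and the formal power series `F` satisfies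
`F·H² + P(F) = χ` in `ℂ[[z,x]]`.  Then every `x`-coefficient `F_k(z)` of `F` is convergent.
-/

open Complex

/-- total degree of a multi-index -/
def totalDeg {σ : Type*} (m : σ →₀ ℕ) : ℕ := m.sum fun _ e => e

/-- A multivariate formal power series is convergent (has positive radius of convergence)
iff its coefficients satisfy a bound `‖c_m‖ ≤ C · r^{|m|}`. -/
def PSConv {σ : Type*} (F : MvPowerSeries σ ℂ) : Prop :=
  ∃ C r : ℝ, 0 < r ∧ ∀ m : σ →₀ ℕ, ‖MvPowerSeries.coeff m F‖ ≤ C * r ^ totalDeg m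

/-- A formal power series in `(z,x)`, written as an element of
`PowerSeries (MvPowerSeries (Fin n) ℂ)`, is (jointly) convergent iff its coefficients
satisfy a bound `‖c_{k,m}‖ ≤ C · r^{k+|m|}`. -/
def PS2Conv {n : ℕ} (H : PowerSeries (MvPowerSeries (Fin n) ℂ)) : Prop :=
  ∃ C r : ℝ, 0 < r ∧ ∀ (k : ℕ) (m : Fin n →₀ ℕ),
    ‖MvPowerSeries.coeff m (PowerSeries.coeff k H)‖ ≤
      C * r ^ (k + totalDeg m)


/-!
Comparing coefficients of `x^k` in `F·H² + P(F) = χ` gives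
`F_k · H(z,0)² = χ_k - ∑_{i<k} F_i · (H²)_{k-i} - ∑_j (a_j F^j)_k`, and since the `a_j` have no
`x`-free term, the right-hand side only involves `F_0, …, F_{k-1}`. Convergent series in `z`
form a subring of `ℂ[[z]]` in which a series with nonzero constant term is invertible, so all
`F_k` are convergent by induction on `k`.
-/

open Finset Finset.HasAntidiagonal Filter Topology

lemma totalDeg_eq_degree {σ : Type*} (m : σ →₀ ℕ) : totalDeg m = m.degree := rfl

lemma totalDeg_fst_add_totalDeg_snd {σ : Type*} [DecidableEq σ] {m : σ →₀ ℕ}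
    {p : (σ →₀ ℕ) × (σ →₀ ℕ)} (hp : p ∈ antidiagonal m) :
    totalDeg p.1 + totalDeg p.2 = totalDeg m := by
  simp only [totalDeg_eq_degree, ← map_add, mem_antidiagonal.mp hp]

lemma sum_antidiagonal_pow_totalDeg_fst_le {σ : Type*} [Fintype σ] [DecidableEq σ]
    (m : σ →₀ ℕ) {t : ℝ} (ht0 : 0 ≤ t) (ht1 : t < 1) :
    ∑ p ∈ antidiagonal m, t ^ totalDeg p.1 ≤ (1 - t)⁻¹ ^ Fintype.card σ := by
  have hinj : Set.InjOn (fun p : (σ →₀ ℕ) × (σ →₀ ℕ) => (p.1 : σ → ℕ)) (antidiagonal m) :=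
    fun p hp q hq h => by
      have h₁ : p.1 = q.1 := DFunLike.coe_injective h
      have h₂ : p.1 + p.2 = q.1 + q.2 :=
        (mem_antidiagonal.mp hp).trans (mem_antidiagonal.mp hq).symm
      exact Prod.ext h₁ (add_left_cancel (h₁ ▸ h₂))
  calc ∑ p ∈ antidiagonal m, t ^ totalDeg p.1
      = ∑ f ∈ (antidiagonal m).image fun p : (σ →₀ ℕ) × (σ →₀ ℕ) => (p.1 : σ → ℕ),
          ∏ i, t ^ f i := by
        rw [sum_image hinj]
        refine sum_congr rfl fun p _ => ?_
        rw [totalDeg_eq_degree, Finsupp.degree_eq_sum, prod_pow_eq_pow_sum]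
    _ ≤ ∑ f ∈ Fintype.piFinset fun i => range (m i + 1), ∏ i, t ^ f i := by
        refine sum_le_sum_of_subset_of_nonneg ?_ fun f _ _ => by positivity
        simp only [subset_iff, mem_image, Fintype.mem_piFinset, mem_range, Nat.lt_succ_iff]
        rintro _ ⟨p, hp, rfl⟩ i
        exact antidiagonal.fst_le hp i
    _ = ∏ i, ∑ j ∈ range (m i + 1), t ^ j := (prod_univ_sum _ _).symm
    _ ≤ ∏ _i : σ, (1 - t)⁻¹ := by
        refine prod_le_prod (fun i _ => by positivity) fun i _ => ?_
        have hgeom := geom_sum_Ico_le_of_lt_one (m := 0) (n := m i + 1) ht0 ht1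
        rwa [← range_eq_Ico, pow_zero, one_div] at hgeom
    _ = (1 - t)⁻¹ ^ Fintype.card σ := by rw [prod_const, card_univ]

lemma exists_mul_inv_one_sub_pow_le {C g : ℝ} (hg : 0 < g) (N : ℕ) :
    ∃ t, 0 < t ∧ t < 1 ∧ C * t * (1 - t)⁻¹ ^ N ≤ g := by
  have hcont : ContinuousAt (fun t : ℝ => C * t * (1 - t)⁻¹ ^ N) 0 := by
    fun_prop (disch := norm_num)
  have hsmall : ∀ᶠ t in 𝓝[>] (0 : ℝ), t < 1 ∧ C * t * (1 - t)⁻¹ ^ N < g :=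
    nhdsWithin_le_nhds <| (gt_mem_nhds one_pos).and <| hcont.eventually <| gt_mem_nhds <| by
      simpa using hg
  obtain ⟨t, ⟨ht1, htg⟩, ht0⟩ := (hsmall.and self_mem_nhdsWithin).exists
  exact ⟨t, ht0, ht1, htg.le⟩

namespace PSConv

variable {σ : Type*}

open MvPowerSeries

lemma exists_bound {F : MvPowerSeries σ ℂ} (hF : PSConv F) :
    ∃ C r₀ : ℝ, 0 ≤ C ∧ 0 < r₀ ∧
      ∀ r ≥ r₀, ∀ m : σ →₀ ℕ, ‖coeff m F‖ ≤ C * r ^ totalDeg m := by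
  obtain ⟨C, r₀, hr₀, hb⟩ := hF
  have hC : 0 ≤ C := by simpa [totalDeg] using (norm_nonneg _).trans (hb 0)
  exact ⟨C, r₀, hC, hr₀, fun r hr m => (hb m).trans (by gcongr)⟩

lemma zero : PSConv (0 : MvPowerSeries σ ℂ) :=
  ⟨0, 1, one_pos, fun m => by simp⟩

lemma one [DecidableEq σ] : PSConv (1 : MvPowerSeries σ ℂ) :=
  ⟨1, 1, one_pos, fun m => by rw [coeff_one]; split_ifs <;> simp⟩

lemma neg {F : MvPowerSeries σ ℂ} (hF : PSConv F) : PSConv (-F) := by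
  simpa [PSConv] using hF

lemma add {F G : MvPowerSeries σ ℂ} (hF : PSConv F) (hG : PSConv G) : PSConv (F + G) := by
  obtain ⟨C₁, r₁, -, hr₁, h₁⟩ := hF.exists_bound
  obtain ⟨C₂, r₂, hC₂, -, h₂⟩ := hG.exists_bound
  refine ⟨C₁ + C₂, max r₁ r₂, lt_max_of_lt_left hr₁, fun m => ?_⟩
  rw [map_add, add_mul]
  exact (norm_add_le _ _).trans
    (add_le_add (h₁ _ (le_max_left _ _) m) (h₂ _ (le_max_right _ _) m))

lemma mul [Fintype σ] {F G : MvPowerSeries σ ℂ} (hF : PSConv F) (hG : PSConv G) :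
    PSConv (F * G) := by
  classical
  obtain ⟨C₁, r₁, hC₁, hr₁, h₁⟩ := hF.exists_bound
  obtain ⟨C₂, r₂, hC₂, -, h₂⟩ := hG.exists_bound
  set R := max r₁ r₂
  have hR : 0 < R := lt_max_of_lt_left hr₁
  -- bounding the second factor with radius `2R` leaves a geometric weight `2⁻¹ ^ |p.1|`
  have hterm : ∀ m : σ →₀ ℕ, ∀ p ∈ antidiagonal m, ‖coeff p.1 F * coeff p.2 G‖ ≤
      C₁ * C₂ * (2 * R) ^ totalDeg m * 2⁻¹ ^ totalDeg p.1 := fun m p hp => by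
    calc ‖coeff p.1 F * coeff p.2 G‖
        ≤ C₁ * R ^ totalDeg p.1 * (C₂ * (2 * R) ^ totalDeg p.2) := by
          rw [norm_mul]
          gcongr
          exacts [h₁ _ (le_max_left _ _) _, h₂ _ (by linarith [le_max_right r₁ r₂]) _]
      _ = C₁ * C₂ * (2 * R) ^ totalDeg m * 2⁻¹ ^ totalDeg p.1 := by
          rw [← totalDeg_fst_add_totalDeg_snd hp, pow_add, mul_pow 2 R (totalDeg p.1), inv_pow]
          field_simp
  refine ⟨C₁ * C₂ * 2 ^ Fintype.card σ, 2 * R, by positivity, fun m => ?_⟩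
  calc ‖coeff m (F * G)‖
      ≤ ∑ p ∈ antidiagonal m, C₁ * C₂ * (2 * R) ^ totalDeg m * 2⁻¹ ^ totalDeg p.1 := by
        rw [coeff_mul]; exact norm_sum_le_of_le _ (hterm m)
    _ = C₁ * C₂ * (2 * R) ^ totalDeg m * ∑ p ∈ antidiagonal m, 2⁻¹ ^ totalDeg p.1 :=
        (mul_sum _ _ _).symm
    _ ≤ C₁ * C₂ * (2 * R) ^ totalDeg m * (1 - 2⁻¹)⁻¹ ^ Fintype.card σ := by
        gcongr; exact sum_antidiagonal_pow_totalDeg_fst_le m (by norm_num) (by norm_num)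
    _ = C₁ * C₂ * 2 ^ Fintype.card σ * (2 * R) ^ totalDeg m := by norm_num; ring


lemma norm_coeff_inv_le [Fintype σ] {G : MvPowerSeries σ ℂ} {C B t : ℝ}
    (hC : 0 ≤ C) (hB : 0 ≤ B)
    (hG : ∀ m, ‖coeff m G‖ ≤ C * (t ^ 2 * B) ^ totalDeg m) (hG0 : constantCoeff G ≠ 0)
    (ht0 : 0 < t) (ht1 : t < 1)
    (htG : C * t * (1 - t)⁻¹ ^ Fintype.card σ ≤ ‖constantCoeff G‖) (m : σ →₀ ℕ) :
    ‖coeff m G⁻¹‖ ≤ ‖constantCoeff G‖⁻¹ * B ^ totalDeg m := by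
  classical
  set g := ‖constantCoeff G‖
  have hg : 0 < g := norm_pos_iff.mpr hG0
  induction m using WellFoundedLT.induction with
  | _ m ih =>
  rw [coeff_inv]
  split_ifs with hm
  · simp [hm, g, totalDeg]
  -- shrinking the radius by `t²` leaves a factor `t ^ (|x.1| + 1)` in every term of the recursion
  have hterm : ∀ x ∈ antidiagonal m,
      ‖if x.2 < m then coeff x.1 G * coeff x.2 G⁻¹ else 0‖ ≤
        C * g⁻¹ * t * B ^ totalDeg m * t ^ totalDeg x.1 := fun x hx => by
    split_ifs with hx2
    swap
    · rw [norm_zero]; positivity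
    have hx1 : 1 ≤ totalDeg x.1 := by
      refine Nat.one_le_iff_ne_zero.mpr fun h => hx2.ne ?_
      rw [totalDeg_eq_degree, Finsupp.degree_eq_zero_iff] at h
      simpa [h] using mem_antidiagonal.mp hx
    calc ‖coeff x.1 G * coeff x.2 G⁻¹‖
        ≤ C * (t ^ 2 * B) ^ totalDeg x.1 * (g⁻¹ * B ^ totalDeg x.2) := by
          rw [norm_mul]; exact mul_le_mul (hG _) (ih _ hx2) (norm_nonneg _) (by positivity)
      _ = C * g⁻¹ * B ^ totalDeg m * t ^ (2 * totalDeg x.1) := by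
          rw [← totalDeg_fst_add_totalDeg_snd hx, mul_pow, pow_add, pow_mul]; ring
      _ ≤ C * g⁻¹ * B ^ totalDeg m * t ^ (totalDeg x.1 + 1) :=
          mul_le_mul_of_nonneg_left (pow_le_pow_of_le_one ht0.le ht1.le (by omega))
            (by positivity)
      _ = C * g⁻¹ * t * B ^ totalDeg m * t ^ totalDeg x.1 := by ring
  calc ‖-(constantCoeff G)⁻¹ *
        ∑ x ∈ antidiagonal m, if x.2 < m then coeff x.1 G * coeff x.2 G⁻¹ else 0‖
      ≤ g⁻¹ * ∑ x ∈ antidiagonal m, C * g⁻¹ * t * B ^ totalDeg m * t ^ totalDeg x.1 := by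
        rw [norm_mul, norm_neg, norm_inv]
        exact mul_le_mul_of_nonneg_left (norm_sum_le_of_le _ hterm) (by positivity)
    _ = g⁻¹ * (C * g⁻¹ * t * B ^ totalDeg m * ∑ x ∈ antidiagonal m, t ^ totalDeg x.1) := by
        rw [← mul_sum]
    _ ≤ g⁻¹ * (C * g⁻¹ * t * B ^ totalDeg m * (1 - t)⁻¹ ^ Fintype.card σ) :=
        mul_le_mul_of_nonneg_left (mul_le_mul_of_nonneg_left
          (sum_antidiagonal_pow_totalDeg_fst_le m ht0.le ht1) (by positivity)) (by positivity)
    _ = (C * t * (1 - t)⁻¹ ^ Fintype.card σ) * g⁻¹ * (g⁻¹ * B ^ totalDeg m) := by ring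
    _ ≤ g * g⁻¹ * (g⁻¹ * B ^ totalDeg m) := by gcongr
    _ = g⁻¹ * B ^ totalDeg m := by rw [mul_inv_cancel₀ hg.ne', one_mul]

lemma inv [Fintype σ] {G : MvPowerSeries σ ℂ} (hG : PSConv G) (hG0 : constantCoeff G ≠ 0) :
    PSConv G⁻¹ := by
  obtain ⟨C, r, hC, hr, hb⟩ := hG.exists_bound
  obtain ⟨t, ht0, ht1, htG⟩ :=
    exists_mul_inv_one_sub_pow_le (C := C) (norm_pos_iff.mpr hG0) (Fintype.card σ)
  have hrt : t ^ 2 * (r / t ^ 2) = r := by field_simp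
  exact ⟨_, r / t ^ 2, by positivity,
    norm_coeff_inv_le hC (by positivity) (hrt ▸ hb r le_rfl) hG0 ht0 ht1 htG⟩

end PSConv

def convergentSubring (σ : Type*) [Fintype σ] [DecidableEq σ] :
    Subring (MvPowerSeries σ ℂ) where
  carrier := {F | PSConv F}
  mul_mem' := PSConv.mul
  one_mem' := PSConv.one
  add_mem' := PSConv.add
  zero_mem' := PSConv.zero
  neg_mem' := PSConv.neg

lemma PS2Conv.psConv_coeff {n : ℕ} {H : PowerSeries (MvPowerSeries (Fin n) ℂ)} (hH : PS2Conv H)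
    (k : ℕ) : PSConv (PowerSeries.coeff k H) := by
  obtain ⟨C, r, hr, hb⟩ := hH
  exact ⟨C * r ^ k, r, hr, fun m => (hb k m).trans_eq (by rw [pow_add, mul_assoc])⟩

namespace PowerSeries

variable {R : Type*} [CommRing R] {S : Subring R}

lemma coeff_mul_mem_of_forall_le {φ ψ : R⟦X⟧} {l : ℕ} (hφ : ∀ i ≤ l, coeff i φ ∈ S)
    (hψ : ∀ i ≤ l, coeff i ψ ∈ S) : coeff l (φ * ψ) ∈ S := by
  rw [coeff_mul]
  exact S.sum_mem fun p hp =>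
    S.mul_mem (hφ _ (antidiagonal.fst_le hp)) (hψ _ (antidiagonal.snd_le hp))

lemma coeff_pow_mem_of_forall_le {φ : R⟦X⟧} {l : ℕ} (hφ : ∀ i ≤ l, coeff i φ ∈ S) (j : ℕ) :
    coeff l (φ ^ j) ∈ S := by
  induction j generalizing l with
  | zero =>
    rw [pow_zero, coeff_one]
    split_ifs
    exacts [S.one_mem, S.zero_mem]
  | succ j ih =>
    rw [pow_succ]
    exact coeff_mul_mem_of_forall_le (fun i hi => ih fun i' hi' => hφ i' (hi'.trans hi)) hφ

lemma coeff_mul_pow_mem {a φ : R⟦X⟧} {k : ℕ} (ha0 : coeff 0 a = 0) (ha : ∀ i, coeff i a ∈ S)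
    (hφ : ∀ i < k, coeff i φ ∈ S) (j : ℕ) : coeff k (a * φ ^ j) ∈ S := by
  rw [coeff_mul]
  refine S.sum_mem fun p hp => ?_
  have hpk := mem_antidiagonal.mp hp
  rcases Nat.eq_zero_or_pos p.1 with hp0 | hpos
  · rw [hp0, ha0, zero_mul]
    exact S.zero_mem
  · exact S.mul_mem (ha _) (coeff_pow_mem_of_forall_le (fun i hi => hφ i (by omega)) j)

lemma coeff_mem_of_coeff_mul_mem {φ ψ : R⟦X⟧} {k : ℕ} {u : R} (hψ : ∀ i, coeff i ψ ∈ S)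
    (hu : u ∈ S) (hψu : coeff 0 ψ * u = 1) (hφ : ∀ i < k, coeff i φ ∈ S)
    (hφψ : coeff k (φ * ψ) ∈ S) : coeff k φ ∈ S := by
  have hsplit : coeff k (φ * ψ) =
      ∑ i ∈ range k, coeff i φ * coeff (k - i) ψ + coeff k φ * coeff 0 ψ := by
    rw [coeff_mul, Nat.sum_antidiagonal_eq_sum_range_succ (fun i j => coeff i φ * coeff j ψ),
      sum_range_succ, Nat.sub_self]
  have hk : coeff k φ = (coeff k (φ * ψ) - ∑ i ∈ range k, coeff i φ * coeff (k - i) ψ) * u := by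
    rw [hsplit, add_sub_cancel_left, mul_assoc, hψu, mul_one]
  rw [hk]
  exact S.mul_mem
    (S.sub_mem hφψ (S.sum_mem fun i hi => S.mul_mem (hφ i (mem_range.mp hi)) (hψ _))) hu

end PowerSeries

theorem statement5_general (n : ℕ)
    (H : PowerSeries (MvPowerSeries (Fin n) ℂ))
    (hHconv : PS2Conv H)
    (hH0 : MvPowerSeries.constantCoeff
        (PowerSeries.coeff 0 H) ≠ 0)
    (d : ℕ)
    (a : ℕ → PowerSeries (MvPowerSeries (Fin n) ℂ))
    -- each `a_j` has no term independent of `x`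
    (ha0 : ∀ j ∈ Finset.Icc 1 d, PowerSeries.coeff 0 (a j) = 0)
    -- each `x`-coefficient `a_{j,k}(z)` is convergent
    (haconv : ∀ j ∈ Finset.Icc 1 d, ∀ k : ℕ,
      PSConv (PowerSeries.coeff k (a j)))
    (χ : PowerSeries (MvPowerSeries (Fin n) ℂ))
    (hχconv : ∀ k : ℕ, PSConv (PowerSeries.coeff k χ))
    (F : PowerSeries (MvPowerSeries (Fin n) ℂ))
    -- the identity `F·H² + P(F) = χ` in `ℂ[[z,x]]`, with `P(T) = Σ_{j=1}^d a_j T^j`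
    (hFeq : F * H ^ 2 + ∑ j ∈ Finset.Icc 1 d, a j * F ^ j = χ) :
    ∀ k : ℕ, PSConv (PowerSeries.coeff k F) := by
  set S := convergentSubring (Fin n)
  have hH2 : ∀ i, PowerSeries.coeff i (H ^ 2) ∈ S :=
    fun i => PowerSeries.coeff_pow_mem_of_forall_le (fun j _ => hHconv.psConv_coeff j) 2
  have hc : MvPowerSeries.constantCoeff (PowerSeries.coeff 0 (H ^ 2)) ≠ 0 := by
    rw [PowerSeries.coeff_zero_eq_constantCoeff_apply, map_pow,
      ← PowerSeries.coeff_zero_eq_constantCoeff_apply, map_pow]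
    exact pow_ne_zero 2 hH0
  intro k
  induction k using Nat.strong_induction_on with
  | _ k ih =>
  refine PowerSeries.coeff_mem_of_coeff_mul_mem hH2 (PSConv.inv (hH2 0) hc)
    (MvPowerSeries.mul_inv_cancel _ hc) ih ?_
  have hcoeff : PowerSeries.coeff k (F * H ^ 2) =
      PowerSeries.coeff k χ - ∑ j ∈ Finset.Icc 1 d, PowerSeries.coeff k (a j * F ^ j) := by
    rw [← hFeq, map_add, map_sum, add_sub_cancel_right]
  rw [hcoeff]
  exact S.sub_mem (hχconv k) (S.sum_mem fun j hj =>
    PowerSeries.coeff_mul_pow_mem (ha0 j hj) (haconv j hj) ih j)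

theorem statement5 (n : ℕ) (hn : 1 ≤ n)
    (H : PowerSeries (MvPowerSeries (Fin n) ℂ))
    (hHconv : PS2Conv H)
    (hH0 : MvPowerSeries.constantCoeff
        (PowerSeries.coeff 0 H) ≠ 0)
    (d : ℕ) (hd : 1 ≤ d)
    (a : ℕ → PowerSeries (MvPowerSeries (Fin n) ℂ))
    -- each `a_j` has no term independent of `x`
    (ha0 : ∀ j ∈ Finset.Icc 1 d, PowerSeries.coeff 0 (a j) = 0)
    -- each `x`-coefficient `a_{j,k}(z)` is convergent
    (haconv : ∀ j ∈ Finset.Icc 1 d, ∀ k : ℕ,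
      PSConv (PowerSeries.coeff k (a j)))
    (χ : PowerSeries (MvPowerSeries (Fin n) ℂ))
    (hχconv : ∀ k : ℕ, PSConv (PowerSeries.coeff k χ))
    (F : PowerSeries (MvPowerSeries (Fin n) ℂ))
    -- the identity `F·H² + P(F) = χ` in `ℂ[[z,x]]`, with `P(T) = Σ_{j=1}^d a_j T^j`
    (hFeq : F * H ^ 2 + ∑ j ∈ Finset.Icc 1 d, a j * F ^ j = χ) :
    ∀ k : ℕ, PSConv (PowerSeries.coeff k F) :=
  statement5_general n H hHconv hH0 d a ha0 haconv χ hχconv F hFeq
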